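/- Let σ and μ be compactly supported Borel probability measures on ℝ^m and let γ be an optimal coupling of σ and μ, i.e. a coupling with ∫|x−y|² dγ(x,y) = W₂²(σ, μ). Let ψ : ℝ^m → ℝ be of class C² with bounded gradient and bounded Hessian, let (U_t) be the flow of ∇ψ, and set μ_t = (U_t)_#μ. Then limsup_{t→0⁺} (W₂²(σ, μ_t) − W₂²(σ, μ))/t ≤ 2 ∫ ⟨∇ψ(y), y − x⟩ dγ(x, y). -/

import Mathlib

open MeasureTheory RealInnerProductSpace Filter

/-- The squared Wasserstein distance of order 2: the infimum of `∫ d(x,y)² dπ` over all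
couplings `π` of `μ` and `ν`. -/
noncomputable def W2sq {X : Type*} [MeasurableSpace X] [PseudoMetricSpace X]
    (μ ν : Measure X) : ℝ :=
  sInf {r : ℝ | ∃ π : Measure (X × X), π.map Prod.fst = μ ∧ π.map Prod.snd = ν ∧
    r = ∫ p, dist p.1 p.2 ^ 2 ∂π}

open Set Metric Topology
open scoped NNReal

/-!
Transporting the optimal coupling `γ` along `(x, y) ↦ (x, U_t y)` gives a coupling of `σ` and
`μ_t`, so `W₂²(σ, μ_t) ≤ ∫ |x - U_t y|² dγ`. Bounded gradient and Hessian give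
`U_t y = y + t ∇ψ(y) + O(t²)` uniformly in `y`, and since the supports are bounded, expanding the
square yields `W₂²(σ, μ_t) ≤ W₂²(σ, μ) + 2t ∫ ⟪∇ψ(y), y - x⟫ dγ + O(t²)`. Conversely, pulling any
coupling of `σ` and `μ_t` back along `U_{-t} = U_t⁻¹` gives `W₂²(σ, μ) ≤ W₂²(σ, μ_t) + O(t)`, which
keeps the difference quotients bounded below.
-/

def IsCoupling {X : Type*} [MeasurableSpace X] (π : Measure (X × X)) (μ ν : Measure X) : Prop :=
  π.map Prod.fst = μ ∧ π.map Prod.snd = ν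

namespace IsCoupling

variable {X : Type*} [MeasurableSpace X] {π : Measure (X × X)} {μ ν : Measure X}

lemma isProbabilityMeasure [IsProbabilityMeasure μ] (h : IsCoupling π μ ν) :
    IsProbabilityMeasure π := by
  constructor
  have := Measure.map_apply (μ := π) measurable_fst MeasurableSet.univ
  rwa [h.1, preimage_univ, measure_univ, eq_comm] at this

lemma ae_fst (h : IsCoupling π μ ν) {p : X → Prop} (hp : ∀ᵐ x ∂μ, p x) : ∀ᵐ q ∂π, p q.1 :=
  ae_of_ae_map measurable_fst.aemeasurable (h.1 ▸ hp)

lemma ae_snd (h : IsCoupling π μ ν) {p : X → Prop} (hp : ∀ᵐ y ∂ν, p y) : ∀ᵐ q ∂π, p q.2 :=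
  ae_of_ae_map measurable_snd.aemeasurable (h.2 ▸ hp)

lemma map_prodMap (h : IsCoupling π μ ν) {T : X → X} (hT : Measurable T) :
    IsCoupling (π.map (Prod.map id T)) μ (ν.map T) := by
  have hmap : Measurable (Prod.map id T : X × X → X × X) := measurable_id.prodMap hT
  constructor
  · rw [Measure.map_map measurable_fst hmap, ← h.1]
    rfl
  · rw [Measure.map_map measurable_snd hmap, ← h.2, Measure.map_map hT measurable_snd]
    rfl

lemma ae_dist_le [PseudoMetricSpace X] (h : IsCoupling π μ ν) {x₀ : X} {r r' : ℝ}
    (hμ : ∀ᵐ x ∂μ, x ∈ closedBall x₀ r) (hν : ∀ᵐ y ∂ν, y ∈ closedBall x₀ r') :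
    ∀ᵐ p ∂π, dist p.1 p.2 ≤ r + r' := by
  filter_upwards [h.ae_fst hμ, h.ae_snd hν] with p h₁ h₂
  exact (dist_triangle_right p.1 p.2 x₀).trans (add_le_add h₁ h₂)

end IsCoupling

section Wasserstein

variable {X : Type*} [PseudoMetricSpace X] [MeasurableSpace X] {π : Measure (X × X)}
  {μ ν : Measure X}

lemma W2sq_le_integral (h : IsCoupling π μ ν) : W2sq μ ν ≤ ∫ p, dist p.1 p.2 ^ 2 ∂π :=
  csInf_le ⟨0, by rintro r ⟨π, -, -, rfl⟩; positivity⟩ ⟨π, h.1, h.2, rfl⟩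

lemma le_W2sq {a : ℝ} (hne : ∃ π, IsCoupling π μ ν)
    (h : ∀ π, IsCoupling π μ ν → a ≤ ∫ p, dist p.1 p.2 ^ 2 ∂π) : a ≤ W2sq μ ν := by
  obtain ⟨π, hπ⟩ := hne
  exact le_csInf ⟨_, π, hπ.1, hπ.2, rfl⟩ (by rintro r ⟨π', h₁, h₂, rfl⟩; exact h π' ⟨h₁, h₂⟩)

lemma integrable_dist_sq [IsFiniteMeasure π] [OpensMeasurableSpace X] [SecondCountableTopology X]
    {D : ℝ} (hD : ∀ᵐ p ∂π, dist p.1 p.2 ≤ D) : Integrable (fun p => dist p.1 p.2 ^ 2) π := by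
  refine .of_bound ((continuous_fst.dist continuous_snd).pow 2).aestronglyMeasurable (D ^ 2) ?_
  filter_upwards [hD] with p hp
  rw [Real.norm_of_nonneg (by positivity)]
  exact pow_le_pow_left₀ dist_nonneg hp 2

lemma ae_map_mem_closedBall [OpensMeasurableSpace X] {T : X → X} (hT : Measurable T) {x₀ : X}
    {R ε : ℝ} (hTε : ∀ y, dist (T y) y ≤ ε) (hν : ∀ᵐ y ∂ν, y ∈ closedBall x₀ R) :
    ∀ᵐ y ∂ν.map T, y ∈ closedBall x₀ (R + ε) := by
  refine (ae_map_iff hT.aemeasurable measurableSet_closedBall).2 ?_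
  filter_upwards [hν] with y (hy : dist y x₀ ≤ R)
  linarith [dist_triangle (T y) y x₀, hTε y]

variable [OpensMeasurableSpace X] [SecondCountableTopology X]

lemma W2sq_map_le_integral (h : IsCoupling π μ ν) {T : X → X} (hT : Measurable T) :
    W2sq μ (ν.map T) ≤ ∫ p, dist p.1 (T p.2) ^ 2 ∂π := by
  refine (W2sq_le_integral (h.map_prodMap hT)).trans_eq ?_
  exact integral_map (measurable_id.prodMap hT).aemeasurable
    ((continuous_fst.dist continuous_snd).pow 2).aestronglyMeasurable

lemma W2sq_le_W2sq_map_add {σ : Measure X} [IsProbabilityMeasure σ] {T S : X → X}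
    (hT : Measurable T) (hS : Measurable S) (hST : ∀ y, S (T y) = y) {ε : ℝ}
    (hSε : ∀ y, dist (S y) y ≤ ε) (hne : ∃ π, IsCoupling π σ (ν.map T)) {x₀ : X} {R R' : ℝ}
    (hσ : ∀ᵐ x ∂σ, x ∈ closedBall x₀ R) (hνT : ∀ᵐ y ∂ν.map T, y ∈ closedBall x₀ R') :
    W2sq σ ν ≤ W2sq σ (ν.map T) + (2 * (R + R') * ε + ε ^ 2) := by
  have hν : (ν.map T).map S = ν := by
    rw [Measure.map_map hS hT, show S ∘ T = id from funext hST, Measure.map_id]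
  rw [← sub_le_iff_le_add]
  refine le_W2sq hne fun π hπ => ?_
  have := hπ.isProbabilityMeasure
  have hD := hπ.ae_dist_le hσ hνT
  have hcost : ∀ᵐ p ∂π, dist p.1 (S p.2) ^ 2 ≤ dist p.1 p.2 ^ 2 + (2 * (R + R') * ε + ε ^ 2) := by
    filter_upwards [hD] with p hp
    have h₁ : dist p.1 (S p.2) ≤ dist p.1 p.2 + ε :=
      (dist_triangle p.1 p.2 (S p.2)).trans (by rw [dist_comm p.2]; linarith [hSε p.2])
    have h₂ := pow_le_pow_left₀ dist_nonneg h₁ 2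
    nlinarith [dist_nonneg (x := p.1) (y := p.2), dist_nonneg.trans (hSε x₀)]
  calc W2sq σ ν - (2 * (R + R') * ε + ε ^ 2)
      ≤ ∫ p, dist p.1 (S p.2) ^ 2 ∂π - (2 * (R + R') * ε + ε ^ 2) :=
        sub_le_sub_right (hν ▸ W2sq_map_le_integral hπ hS) _
    _ ≤ ∫ p, (dist p.1 p.2 ^ 2 + (2 * (R + R') * ε + ε ^ 2)) ∂π
          - (2 * (R + R') * ε + ε ^ 2) :=
        sub_le_sub_right (integral_mono_of_nonneg (.of_forall fun _ => by positivity)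
          ((integrable_dist_sq hD).add (integrable_const _)) hcost) _
    _ = ∫ p, dist p.1 p.2 ^ 2 ∂π := by
        rw [integral_add (integrable_dist_sq hD) (integrable_const _), integral_const,
          probReal_univ, one_smul, add_sub_cancel_right]

end Wasserstein

lemma dist_sq_le_dist_sq_add_inner {E : Type*} [NormedAddCommGroup E] [InnerProductSpace ℝ E]
    (x y z v : E) (t : ℝ) :
    dist x z ^ 2 ≤ dist x y ^ 2 + 2 * t * ⟪v, y - x⟫ + 2 * ‖z - y - t • v‖ * ‖y - x‖ +
      ‖z - y‖ ^ 2 := by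
  have hsplit : z - x = (y - x) + (z - y) := by abel
  have hinner : ⟪y - x, z - y⟫ = t * ⟪v, y - x⟫ + ⟪z - y - t • v, y - x⟫ := by
    rw [inner_sub_left (z - y), real_inner_smul_left, real_inner_comm (y - x) (z - y)]
    ring
  rw [dist_eq_norm', dist_eq_norm', hsplit, norm_add_sq_real, hinner]
  nlinarith [real_inner_le_norm (z - y - t • v) (y - x)]

section FirstOrder

variable {E : Type*} [NormedAddCommGroup E] [InnerProductSpace ℝ E] [MeasurableSpace E]
  [BorelSpace E] [SecondCountableTopology E]

lemma W2sq_map_le_add {σ μ : Measure E} {γ : Measure (E × E)} [IsProbabilityMeasure γ]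
    (hγ : IsCoupling γ σ μ) {D : ℝ} (hD : ∀ᵐ p ∂γ, dist p.1 p.2 ≤ D) {T v : E → E}
    (hT : Measurable T) (hv : Integrable (fun p => ⟪v p.2, p.2 - p.1⟫) γ) {t δ ε : ℝ}
    (hδ : ∀ y, ‖T y - y - t • v y‖ ≤ δ) (hε : ∀ y, ‖T y - y‖ ≤ ε) :
    W2sq σ (μ.map T) ≤
      ∫ p, dist p.1 p.2 ^ 2 ∂γ + 2 * t * ∫ p, ⟪v p.2, p.2 - p.1⟫ ∂γ + (2 * δ * D + ε ^ 2) := by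
  have hδ0 : 0 ≤ δ := (norm_nonneg _).trans (hδ 0)
  have hcost : ∀ᵐ p ∂γ, dist p.1 (T p.2) ^ 2 ≤
      dist p.1 p.2 ^ 2 + 2 * t * ⟪v p.2, p.2 - p.1⟫ + (2 * δ * D + ε ^ 2) := by
    filter_upwards [hD] with p hp
    have h₁ := dist_sq_le_dist_sq_add_inner p.1 p.2 (T p.2) (v p.2) t
    have h₂ : ‖T p.2 - p.2 - t • v p.2‖ * ‖p.2 - p.1‖ ≤ δ * D := by
      rw [← dist_eq_norm' p.1]
      exact mul_le_mul (hδ _) hp dist_nonneg hδ0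
    have h₃ := pow_le_pow_left₀ (norm_nonneg _) (hε p.2) 2
    linarith
  have hint : Integrable (fun p => dist p.1 p.2 ^ 2 + 2 * t * ⟪v p.2, p.2 - p.1⟫) γ :=
    (integrable_dist_sq hD).add (hv.const_mul _)
  calc W2sq σ (μ.map T) ≤ ∫ p, dist p.1 (T p.2) ^ 2 ∂γ := W2sq_map_le_integral hγ hT
    _ ≤ ∫ p, (dist p.1 p.2 ^ 2 + 2 * t * ⟪v p.2, p.2 - p.1⟫ + (2 * δ * D + ε ^ 2)) ∂γ :=
      integral_mono_of_nonneg (.of_forall fun _ => by positivity)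
        (hint.add (integrable_const _)) hcost
    _ = _ := by
      rw [integral_add hint (integrable_const _), integral_add (integrable_dist_sq hD)
        (hv.const_mul _), integral_const_mul, integral_const, probReal_univ, one_smul]

end FirstOrder

structure IsFlow {E : Type*} [NormedAddCommGroup E] [NormedSpace ℝ E] (g : E → E)
    (U : ℝ → E → E) : Prop where
  zero : ∀ x, U 0 x = x
  hasDerivAt : ∀ x t, HasDerivAt (fun s => U s x) (g (U t x)) t

namespace IsFlow

variable {E : Type*} [NormedAddCommGroup E] [NormedSpace ℝ E] {g : E → E} {U : ℝ → E → E}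

lemma neg (hU : IsFlow g U) : IsFlow (-g) fun t => U (-t) where
  zero x := by simpa using hU.zero x
  hasDerivAt x t := by
    simpa [Function.comp_def] using (hU.hasDerivAt x (-t)).scomp t (hasDerivAt_neg t)

lemma norm_sub_le (hU : IsFlow g U) {C : ℝ} (hg : ∀ x, ‖g x‖ ≤ C) (t : ℝ) (x : E) :
    ‖U t x - x‖ ≤ C * |t| := by
  have := convex_univ.norm_image_sub_le_of_norm_hasDerivWithin_le
    (fun s _ => (hU.hasDerivAt x s).hasDerivWithinAt) (fun s _ => hg _) (mem_univ 0) (mem_univ t)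
  simpa [hU.zero] using this

lemma norm_sub_sub_smul_le (hU : IsFlow g U) {C : ℝ} {K : ℝ≥0} (hg : ∀ x, ‖g x‖ ≤ C)
    (hgK : LipschitzWith K g) (t : ℝ) (x : E) :
    ‖U t x - x - t • g x‖ ≤ C * K * t ^ 2 := by
  have hderiv : ∀ s, HasDerivAt (fun s => U s x - s • g x) (g (U s x) - g x) s := fun s => by
    simpa using (hU.hasDerivAt x s).fun_sub ((hasDerivAt_id' s).smul_const (g x))
  have hbound : ∀ s ∈ uIcc 0 t, ‖g (U s x) - g x‖ ≤ C * K * |t| := fun s hs => calc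
    ‖g (U s x) - g x‖ ≤ K * ‖U s x - x‖ := hgK.norm_sub_le _ _
    _ ≤ K * (C * |s|) := by gcongr; exact hU.norm_sub_le hg s x
    _ ≤ C * K * |t| := by
      have : |s| ≤ |t| := by simpa using abs_sub_left_of_mem_uIcc hs
      have hC : 0 ≤ C := (norm_nonneg _).trans (hg x)
      nlinarith [mul_le_mul_of_nonneg_left this (mul_nonneg hC K.coe_nonneg)]
  have := (convex_uIcc (0 : ℝ) t).norm_image_sub_le_of_norm_hasDerivWithin_le
    (fun s _ => (hderiv s).hasDerivWithinAt) hbound left_mem_uIcc right_mem_uIcc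
  simpa [hU.zero, sub_right_comm, mul_assoc, ← sq] using this

lemma add_apply (hU : IsFlow g U) {K : ℝ≥0} (hgK : LipschitzWith K g) (s t : ℝ) (x : E) :
    U s (U t x) = U (s + t) x := by
  have := ODE_solution_unique_univ (v := fun _ => g) (s := fun _ => univ) (t₀ := 0)
    (fun _ => hgK.lipschitzOnWith) (fun s => ⟨hU.hasDerivAt (U t x) s, trivial⟩)
    (fun s => ⟨(hU.hasDerivAt x (s + t)).comp_add_const s t, trivial⟩) (by simp [hU.zero])
  exact congrFun this s

lemma neg_apply_apply (hU : IsFlow g U) {K : ℝ≥0} (hgK : LipschitzWith K g) (t : ℝ) (x : E) :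
    U (-t) (U t x) = x := by
  rw [hU.add_apply hgK, neg_add_cancel, hU.zero]

lemma lipschitzWith (hU : IsFlow g U) {K : ℝ≥0} (hgK : LipschitzWith K g) {t : ℝ} (ht : 0 ≤ t) :
    LipschitzWith ⟨Real.exp (K * t), (Real.exp_pos _).le⟩ (U t) := by
  refine .of_dist_le_mul fun x y => ?_
  have hcurve : ∀ x, Continuous fun s => U s x := fun x =>
    continuous_iff_continuousAt.2 fun s => (hU.hasDerivAt x s).continuousAt
  have := dist_le_of_trajectories_ODE (v := fun _ => g) (fun _ => hgK)
    (hcurve x).continuousOn (fun s _ => (hU.hasDerivAt x s).hasDerivWithinAt)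
    (hcurve y).continuousOn (fun s _ => (hU.hasDerivAt y s).hasDerivWithinAt)
    (by rw [hU.zero, hU.zero]) t ⟨ht, le_rfl⟩
  rwa [sub_zero, mul_comm] at this

lemma continuous (hU : IsFlow g U) {K : ℝ≥0} (hgK : LipschitzWith K g) (t : ℝ) :
    Continuous (U t) := by
  rcases le_total 0 t with ht | ht
  · exact (hU.lipschitzWith hgK ht).continuous
  · simpa using (hU.neg.lipschitzWith hgK.neg (neg_nonneg.2 ht)).continuous

end IsFlow

lemma limsup_slope_le {F : ℝ → ℝ} {W a b c c' : ℝ}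
    (hup : ∀ᶠ t in 𝓝[>] 0, F t ≤ W + a * t + c * t ^ 2)
    -- without `hlow` the quotients may tend to `-∞`, where `limsup` on `ℝ` is a junk value
    (hlow : ∀ᶠ t in 𝓝[>] 0, W ≤ F t + b * t + c' * t ^ 2) :
    limsup (fun t => (F t - W) / t) (𝓝[>] 0) ≤ a := by
  have hlin : ∀ a c : ℝ, Tendsto (fun t => a + c * t) (𝓝[>] 0) (𝓝 a) := fun a c => by
    have : Tendsto (fun t : ℝ => a + c * t) (𝓝 0) (𝓝 (a + c * 0)) :=
      Continuous.tendsto (by fun_prop) 0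
    simpa using this.mono_left nhdsWithin_le_nhds
  have hpos : ∀ᶠ t in 𝓝[>] (0 : ℝ), 0 < t := self_mem_nhdsWithin
  have hup' : ∀ᶠ t in 𝓝[>] 0, (F t - W) / t ≤ a + c * t := by
    filter_upwards [hup, hpos] with t h ht
    rw [div_le_iff₀ ht]
    nlinarith
  have hlow' : ∀ᶠ t in 𝓝[>] 0, -b - 1 ≤ (F t - W) / t := by
    filter_upwards [hlow, hpos,
      (hlin (-b) (-c')).eventually (eventually_gt_nhds (sub_one_lt (-b)))] with t h ht hlt
    rw [le_div_iff₀ ht]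
    nlinarith [mul_lt_mul_of_pos_right hlt ht]
  calc limsup (fun t => (F t - W) / t) (𝓝[>] 0)
      ≤ limsup (fun t => a + c * t) (𝓝[>] 0) :=
        limsup_le_limsup hup' (isCoboundedUnder_le_of_eventually_le _ hlow')
          (hlin a c).isBoundedUnder_le
    _ = a := (hlin a c).limsup_eq

section Gradient

variable {E : Type*} [NormedAddCommGroup E] [InnerProductSpace ℝ E] [CompleteSpace E] {ψ : E → ℝ}

lemma ContDiff.gradient {n : WithTop ℕ∞} (hψ : ContDiff ℝ (n + 1) ψ) :
    ContDiff ℝ n (gradient ψ) :=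
  (InnerProductSpace.toDual ℝ E).symm.toContinuousLinearEquiv.toContinuousLinearMap.contDiff.comp
    (hψ.fderiv_right le_rfl)

lemma lipschitzWith_gradient (hψ : ContDiff ℝ 2 ψ) {K : ℝ}
    (hK : ∀ x, ‖fderiv ℝ (gradient ψ) x‖ ≤ K) : LipschitzWith K.toNNReal (gradient ψ) :=
  lipschitzWith_of_nnnorm_fderiv_le ((hψ.gradient (n := 1)).differentiable one_ne_zero)
    fun x => by
      rw [← NNReal.coe_le_coe, coe_nnnorm, Real.coe_toNNReal']
      exact le_max_of_le_left (hK x)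

end Gradient

lemma exists_ae_mem_closedBall {X : Type*} [PseudoMetricSpace X] [MeasurableSpace X]
    {μ : Measure X} (h : ∃ K, IsCompact K ∧ μ Kᶜ = 0) (x₀ : X) :
    ∃ R, ∀ᵐ x ∂μ, x ∈ closedBall x₀ R := by
  obtain ⟨K, hK, hK0⟩ := h
  obtain ⟨R, hR⟩ := hK.isBounded.subset_closedBall x₀
  exact ⟨R, measure_mono_null (compl_subset_compl.2 hR) hK0⟩

theorem limsup_W2sq_map_flow_le {E : Type*} [NormedAddCommGroup E] [InnerProductSpace ℝ E]
    [MeasurableSpace E] [BorelSpace E] [SecondCountableTopology E]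
    {σ μ : Measure E} [IsProbabilityMeasure σ] {γ : Measure (E × E)} (hγ : IsCoupling γ σ μ)
    (hopt : ∫ p, dist p.1 p.2 ^ 2 ∂γ = W2sq σ μ) {x₀ : E} {R R' : ℝ}
    (hσ : ∀ᵐ x ∂σ, x ∈ closedBall x₀ R) (hμ : ∀ᵐ y ∂μ, y ∈ closedBall x₀ R')
    {g : E → E} {C : ℝ} {K : ℝ≥0} (hgC : ∀ x, ‖g x‖ ≤ C) (hgK : LipschitzWith K g)
    {U : ℝ → E → E} (hU : IsFlow g U) :
    limsup (fun t => (W2sq σ (μ.map (U t)) - W2sq σ μ) / t) (𝓝[>] 0)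
      ≤ 2 * ∫ p, ⟪g p.2, p.2 - p.1⟫ ∂γ := by
  have := hγ.isProbabilityMeasure
  have hUm : ∀ t, Measurable (U t) := fun t => (hU.continuous hgK t).measurable
  have hγD := hγ.ae_dist_le hσ hμ
  have hv : Integrable (fun p => ⟪g p.2, p.2 - p.1⟫) γ := by
    refine .of_bound ((hgK.continuous.comp continuous_snd).inner
      (continuous_snd.sub continuous_fst)).aestronglyMeasurable (C * (R + R')) ?_
    filter_upwards [hγD] with p hp
    rw [dist_eq_norm'] at hp
    exact (norm_inner_le_norm _ _).trans
      (mul_le_mul (hgC _) hp (norm_nonneg _) ((norm_nonneg _).trans (hgC x₀)))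
  refine limsup_slope_le (c := 2 * C * K * (R + R') + C ^ 2) (b := 2 * (R + R') * C)
    (c' := 3 * C ^ 2) (.of_forall fun t => ?_) ?_
  · have := W2sq_map_le_add hγ hγD (hUm t) hv (hU.norm_sub_sub_smul_le hgC hgK t)
      (hU.norm_sub_le hgC t)
    rw [hopt, mul_pow, sq_abs] at this
    linarith
  · filter_upwards [self_mem_nhdsWithin] with t (ht : 0 < t)
    have hdist : ∀ s y, dist (U s y) y ≤ C * |s| := fun s y => by
      simpa [dist_eq_norm] using hU.norm_sub_le hgC s y
    have := W2sq_le_W2sq_map_add (hUm t) (hUm (-t)) (hU.neg_apply_apply hgK t) (hdist (-t))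
      ⟨_, hγ.map_prodMap (hUm t)⟩ hσ (ae_map_mem_closedBall (hUm t) (hdist t) hμ)
    rw [abs_neg, abs_of_pos ht] at this
    linarith

theorem stmt16_general {m : ℕ} (σ μ : Measure (EuclideanSpace ℝ (Fin m)))
    [IsProbabilityMeasure σ]
    (hσc : ∃ K : Set (EuclideanSpace ℝ (Fin m)), IsCompact K ∧ σ Kᶜ = 0)
    (hμc : ∃ K : Set (EuclideanSpace ℝ (Fin m)), IsCompact K ∧ μ Kᶜ = 0)
    (γ : Measure (EuclideanSpace ℝ (Fin m) × EuclideanSpace ℝ (Fin m)))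
    (hγ₁ : γ.map Prod.fst = σ) (hγ₂ : γ.map Prod.snd = μ)
    (hopt : ∫ p, dist p.1 p.2 ^ 2 ∂γ = W2sq σ μ)
    (ψ : EuclideanSpace ℝ (Fin m) → ℝ) (hψ : ContDiff ℝ 2 ψ)
    (K₁ K₂ : ℝ) (hgrad : ∀ x, ‖gradient ψ x‖ ≤ K₁)
    (hhess : ∀ x, ‖fderiv ℝ (gradient ψ) x‖ ≤ K₂)
    (U : ℝ → EuclideanSpace ℝ (Fin m) → EuclideanSpace ℝ (Fin m))
    (hU0 : ∀ x, U 0 x = x)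
    (hUflow : ∀ x t, HasDerivAt (fun s => U s x) (gradient ψ (U t x)) t) :
    limsup (fun t => (W2sq σ (μ.map (U t)) - W2sq σ μ) / t) (nhdsWithin 0 (Set.Ioi 0))
      ≤ 2 * ∫ p, ⟪gradient ψ p.2, p.2 - p.1⟫ ∂γ := by
  obtain ⟨R, hσR⟩ := exists_ae_mem_closedBall hσc 0
  obtain ⟨R', hμR'⟩ := exists_ae_mem_closedBall hμc 0
  exact limsup_W2sq_map_flow_le ⟨hγ₁, hγ₂⟩ hopt hσR hμR' hgrad (lipschitzWith_gradient hψ hhess)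
    ⟨hU0, hUflow⟩

/-- Upper derivative bound (4.6) of the paper in Euclidean form: if `γ` is an optimal
coupling of compactly supported probability measures `σ, μ` and `μ_t = (U_t)_#μ` with
`U_t` the flow of `∇ψ`, then
`limsup_{t→0⁺} (W₂²(σ,μ_t) − W₂²(σ,μ))/t ≤ 2∫⟨∇ψ(y), y − x⟩ dγ(x,y)`. -/
theorem stmt16 {m : ℕ} (σ μ : Measure (EuclideanSpace ℝ (Fin m)))
    [IsProbabilityMeasure σ] [IsProbabilityMeasure μ]
    (hσc : ∃ K : Set (EuclideanSpace ℝ (Fin m)), IsCompact K ∧ σ Kᶜ = 0)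
    (hμc : ∃ K : Set (EuclideanSpace ℝ (Fin m)), IsCompact K ∧ μ Kᶜ = 0)
    (γ : Measure (EuclideanSpace ℝ (Fin m) × EuclideanSpace ℝ (Fin m)))
    (hγ₁ : γ.map Prod.fst = σ) (hγ₂ : γ.map Prod.snd = μ)
    (hopt : ∫ p, dist p.1 p.2 ^ 2 ∂γ = W2sq σ μ)
    (ψ : EuclideanSpace ℝ (Fin m) → ℝ) (hψ : ContDiff ℝ 2 ψ)
    (K₁ K₂ : ℝ) (hgrad : ∀ x, ‖gradient ψ x‖ ≤ K₁)
    (hhess : ∀ x, ‖fderiv ℝ (gradient ψ) x‖ ≤ K₂)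
    (U : ℝ → EuclideanSpace ℝ (Fin m) → EuclideanSpace ℝ (Fin m))
    (hU0 : ∀ x, U 0 x = x)
    (hUflow : ∀ x t, HasDerivAt (fun s => U s x) (gradient ψ (U t x)) t) :
    limsup (fun t => (W2sq σ (μ.map (U t)) - W2sq σ μ) / t) (nhdsWithin 0 (Set.Ioi 0))
      ≤ 2 * ∫ p, ⟪gradient ψ p.2, p.2 - p.1⟫ ∂γ :=
  stmt16_general σ μ hσc hμc γ hγ₁ hγ₂ hopt ψ hψ K₁ K₂ hgrad hhess U hU0 hUflow
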